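/- The Metropolized partial Verlet update preserves the Gibbs measure: with acceptance probability a_J(x) = min(1, exp(−β(H(θ_{h,J}(x)) − H(x)))), for every measurable set A ⊆ ℝ^ν × ℝ^ν, ∫ [ a_J(x)·1_A(θ_{h,J}(x)) + (1 − a_J(x))·1_A(R_J(x)) ] μ(dx) = μ(A). -/

import Mathlib

open MeasureTheory Matrix

/-- The gradient of `U : ℝ^ν → ℝ` in the standard basis. -/
noncomputable def grad {ν : ℕ} (U : (Fin ν → ℝ) → ℝ) (q : Fin ν → ℝ) : Fin ν → ℝ :=
  fun i => fderiv ℝ U q (Pi.single i 1)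

/-- Partial Verlet update: a Verlet step (stepsize `h`, diagonal mass matrix `M`,
potential `U`) applied only to the coordinates with index in `J`, all other
position and momentum coordinates being held fixed. -/
noncomputable def partialVerlet {ν : ℕ} (h : ℝ) (M : Matrix (Fin ν) (Fin ν) ℝ)
    (U : (Fin ν → ℝ) → ℝ) (J : Finset (Fin ν))
    (x : (Fin ν → ℝ) × (Fin ν → ℝ)) : (Fin ν → ℝ) × (Fin ν → ℝ) :=
  let phalf : Fin ν → ℝ := fun i =>
    if i ∈ J then x.2 i - (h / 2) * grad U x.1 i else x.2 i
  let q' : Fin ν → ℝ := fun i =>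
    if i ∈ J then x.1 i + h * (M i i)⁻¹ * phalf i else x.1 i
  let p' : Fin ν → ℝ := fun i =>
    if i ∈ J then phalf i - (h / 2) * grad U q' i else x.2 i
  (q', p')

/-- The map `R_J` flipping the sign of the momentum coordinates with index in `J`
and leaving all other coordinates unchanged. -/
def partialMomentumFlip {ν : ℕ} (J : Finset (Fin ν))
    (x : (Fin ν → ℝ) × (Fin ν → ℝ)) : (Fin ν → ℝ) × (Fin ν → ℝ) :=
  (x.1, fun i => if i ∈ J then -x.2 i else x.2 i)

/-- The Hamiltonian `H(q,p) = ½ pᵀM⁻¹p + U(q)`. -/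
noncomputable def hamiltonian {ν : ℕ} (M : Matrix (Fin ν) (Fin ν) ℝ)
    (U : (Fin ν → ℝ) → ℝ) (x : (Fin ν → ℝ) × (Fin ν → ℝ)) : ℝ :=
  (1 / 2) * (x.2 ⬝ᵥ (M⁻¹).mulVec x.2) + U x.1

/-- The Gibbs probability measure with density `Z⁻¹ e^{-βH}` with respect to
Lebesgue measure on phase space. -/
noncomputable def gibbs {ν : ℕ} (β : ℝ)
    (H : (Fin ν → ℝ) × (Fin ν → ℝ) → ℝ) :
    Measure ((Fin ν → ℝ) × (Fin ν → ℝ)) :=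
  volume.withDensity fun x =>
    ENNReal.ofReal ((∫ y, Real.exp (-β * H y))⁻¹ * Real.exp (-β * H x))

/-- The Metropolis acceptance probability `a(x) = min(1, e^{-β(H(Φx) - H(x))})`. -/
noncomputable def accept {ν : ℕ} (β : ℝ)
    (H : (Fin ν → ℝ) × (Fin ν → ℝ) → ℝ)
    (Φ : (Fin ν → ℝ) × (Fin ν → ℝ) → (Fin ν → ℝ) × (Fin ν → ℝ))
    (x : (Fin ν → ℝ) × (Fin ν → ℝ)) : ℝ :=
  min 1 (Real.exp (-β * (H (Φ x) - H x)))

/-!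
The partial Verlet step is `kick ∘ drift ∘ kick`, where the kick `p ↦ p - (h/2) 1_J ∇U(q)` and
the drift `q ↦ q + h 1_J M⁻¹ p` are shears, so it preserves Lebesgue measure; each shear `S`
satisfies `S ∘ R ∘ S = R`, hence so does the Verlet step `θ`, and `R ∘ θ` is a
volume-preserving involution. For the Gibbs density `ρ` the accepted flux `ρ a = min(ρ, ρ ∘ θ)`
is `R ∘ θ`-invariant since `ρ ∘ R = ρ`, so `θ` transports the accepted mass exactly as `R` does.
The Metropolis step therefore moves `μ` as `R` alone does, and `R` preserves `μ`.
-/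

open Function
open scoped ENNReal

section Shear

variable {α β : Type*} [MeasurableSpace α] [MeasurableSpace β] [AddGroup β] [MeasurableAdd₂ β]
  {μ : Measure α} {ν : Measure β} [SFinite μ] [SFinite ν] [ν.IsAddRightInvariant] {f : α → β}

theorem measurePreserving_shearSnd (hf : Measurable f) :
    MeasurePreserving (fun x : α × β => (x.1, x.2 + f x.1)) (μ.prod ν) (μ.prod ν) :=
  (MeasurePreserving.id μ).skew_product (measurable_snd.add (hf.comp measurable_fst))
    (.of_forall fun a => (measurePreserving_add_right ν (f a)).map_eq)

theorem measurePreserving_shearFst (hf : Measurable f) :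
    MeasurePreserving (fun x : β × α => (x.1 + f x.2, x.2)) (ν.prod μ) (ν.prod μ) :=
  (Measure.measurePreserving_swap.comp (measurePreserving_shearSnd hf)).comp
    Measure.measurePreserving_swap

end Shear

section Metropolis

variable {X : Type*} [MeasurableSpace X] {μ : Measure X}

theorem MeasureTheory.MeasurePreserving.map_withDensity_eq_self {T : X → X}
    (hT : MeasurePreserving T μ μ) {w : X → ℝ≥0∞} (hw : Measurable w)
    (hwT : ∀ x, w (T x) = w x) :
    (μ.withDensity w).map T = μ.withDensity w := by
  ext s hs
  rw [Measure.map_apply hT.measurable hs, withDensity_apply _ (hT.measurable hs),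
    withDensity_apply _ hs, ← hT.setLIntegral_comp_preimage hs hw]
  simp only [hwT]

theorem map_withDensity_min_eq_map_of_reversible {ρ : X → ℝ≥0∞} (hρ : Measurable ρ)
    {θ R : X → X} (hθ : MeasurePreserving θ μ μ) (hR : MeasurePreserving R μ μ) (hRR : Involutive R)
    (hρR : ∀ x, ρ (R x) = ρ x) (hrev : ∀ x, θ (R (θ x)) = R x) :
    (μ.withDensity fun x => min (ρ x) (ρ (θ x))).map θ
      = (μ.withDensity fun x => min (ρ x) (ρ (θ x))).map R := by
  set w := fun x => min (ρ x) (ρ (θ x))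
  have hT : MeasurePreserving (R ∘ θ) μ μ := hR.comp hθ
  have hw : Measurable w := hρ.min (hρ.comp hθ.measurable)
  have hwT : ∀ x, w ((R ∘ θ) x) = w x := fun x => by
    simp only [w, Function.comp_apply, hrev, hρR]
    exact min_comm _ _
  calc (μ.withDensity w).map θ = ((μ.withDensity w).map (R ∘ θ)).map R := by
        rw [Measure.map_map hR.measurable hT.measurable, ← comp_assoc, hRR.comp_self, id_comp]
    _ = (μ.withDensity w).map R := by
        rw [hT.map_withDensity_eq_self hw hwT]

theorem integral_mul_indicator_comp {Y : Type*} [MeasurableSpace Y] {a : X → ℝ}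
    (ha : Measurable a) (ha0 : ∀ x, 0 ≤ a x) {g : X → Y} (hg : Measurable g) {s : Set Y}
    (hs : MeasurableSet s) :
    ∫ x, a x * s.indicator 1 (g x) ∂μ
      = ((μ.withDensity fun x => ENNReal.ofReal (a x)).map g s).toReal := by
  have hind : (fun x => a x * s.indicator 1 (g x)) = (g ⁻¹' s).indicator a := by
    ext x; by_cases hx : g x ∈ s <;> simp [hx]
  rw [hind, integral_indicator (hg hs), Measure.map_apply hg hs, withDensity_apply _ (hg hs),
    integral_eq_lintegral_of_nonneg_ae (.of_forall ha0) ha.aestronglyMeasurable]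

theorem integrable_mul_indicator_comp [IsFiniteMeasure μ] {Y : Type*} [MeasurableSpace Y]
    {b : X → ℝ} (hb : Measurable b) (hb0 : ∀ x, 0 ≤ b x) (hb1 : ∀ x, b x ≤ 1) {g : X → Y}
    (hg : Measurable g) {s : Set Y} (hs : MeasurableSet s) :
    Integrable (fun x => b x * s.indicator 1 (g x)) μ := by
  refine .of_bound (hb.mul ((measurable_one.indicator hs).comp hg)).aestronglyMeasurable 1
    (.of_forall fun x => ?_)
  by_cases hx : g x ∈ s <;> simp [hx, abs_of_nonneg (hb0 x), hb1 x]

theorem integral_metropolis_eq [IsFiniteMeasure μ] {a : X → ℝ} (ha : Measurable a)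
    (ha0 : ∀ x, 0 ≤ a x) (ha1 : ∀ x, a x ≤ 1) {θ R : X → X} (hθ : Measurable θ)
    (hR : MeasurePreserving R μ μ)
    (hbal : (μ.withDensity fun x => ENNReal.ofReal (a x)).map θ
      = (μ.withDensity fun x => ENNReal.ofReal (a x)).map R)
    {A : Set X} (hA : MeasurableSet A) :
    ∫ x, (a x * A.indicator 1 (θ x) + (1 - a x) * A.indicator 1 (R x)) ∂μ = (μ A).toReal := by
  have accepted : ∫ x, a x * A.indicator 1 (θ x) ∂μ = ∫ x, a x * A.indicator 1 (R x) ∂μ := by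
    rw [integral_mul_indicator_comp ha ha0 hθ hA,
      integral_mul_indicator_comp ha ha0 hR.measurable hA, hbal]
  have rejected : Integrable (fun x => (1 - a x) * A.indicator 1 (R x)) μ :=
    integrable_mul_indicator_comp (measurable_const.sub ha) (fun x => sub_nonneg.2 (ha1 x))
      (fun x => sub_le_self _ (ha0 x)) hR.measurable hA
  rw [integral_add (integrable_mul_indicator_comp ha ha0 ha1 hθ hA) rejected, accepted,
    ← integral_add (integrable_mul_indicator_comp ha ha0 ha1 hR.measurable hA) rejected]
  simp only [← add_mul, add_sub_cancel, one_mul]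
  rw [← integral_map hR.measurable.aemeasurable
    (measurable_one.indicator hA).aestronglyMeasurable, hR.map_eq, integral_indicator_one hA,
    measureReal_def]

end Metropolis

section Gibbs

variable {ν : ℕ} {β : ℝ} {H : (Fin ν → ℝ) × (Fin ν → ℝ) → ℝ}

noncomputable def gibbsDensity (β : ℝ) (H : (Fin ν → ℝ) × (Fin ν → ℝ) → ℝ)
    (x : (Fin ν → ℝ) × (Fin ν → ℝ)) : ℝ≥0∞ :=
  ENNReal.ofReal ((∫ y, Real.exp (-β * H y))⁻¹ * Real.exp (-β * H x))

theorem gibbs_eq_withDensity : gibbs β H = volume.withDensity (gibbsDensity β H) := rfl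

theorem measurable_gibbsDensity (hH : Measurable H) : Measurable (gibbsDensity β H) := by
  unfold gibbsDensity; fun_prop

theorem isFiniteMeasure_gibbs (hint : Integrable (fun x => Real.exp (-β * H x))) :
    IsFiniteMeasure (gibbs β H) :=
  isFiniteMeasure_withDensity_ofReal (hint.const_mul _).hasFiniteIntegral

theorem gibbsDensity_apply_of_invariant {T : (Fin ν → ℝ) × (Fin ν → ℝ) → (Fin ν → ℝ) × (Fin ν → ℝ)}
    (hHT : ∀ x, H (T x) = H x) (x : (Fin ν → ℝ) × (Fin ν → ℝ)) :
    gibbsDensity β H (T x) = gibbsDensity β H x := by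
  rw [gibbsDensity, hHT]; rfl

theorem measurePreserving_gibbs {T : (Fin ν → ℝ) × (Fin ν → ℝ) → (Fin ν → ℝ) × (Fin ν → ℝ)}
    (hH : Measurable H) (hT : MeasurePreserving T) (hHT : ∀ x, H (T x) = H x) :
    MeasurePreserving T (gibbs β H) (gibbs β H) :=
  ⟨hT.measurable, hT.map_withDensity_eq_self (measurable_gibbsDensity hH)
    (gibbsDensity_apply_of_invariant hHT)⟩

theorem measurable_accept {Φ : (Fin ν → ℝ) × (Fin ν → ℝ) → (Fin ν → ℝ) × (Fin ν → ℝ)}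
    (hH : Measurable H) (hΦ : Measurable Φ) : Measurable (accept β H Φ) := by
  unfold accept; fun_prop

theorem accept_nonneg (Φ : (Fin ν → ℝ) × (Fin ν → ℝ) → (Fin ν → ℝ) × (Fin ν → ℝ))
    (x : (Fin ν → ℝ) × (Fin ν → ℝ)) : 0 ≤ accept β H Φ x :=
  le_min zero_le_one (Real.exp_pos _).le

theorem accept_le_one (Φ : (Fin ν → ℝ) × (Fin ν → ℝ) → (Fin ν → ℝ) × (Fin ν → ℝ))
    (x : (Fin ν → ℝ) × (Fin ν → ℝ)) : accept β H Φ x ≤ 1 :=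
  min_le_left _ _

theorem gibbs_withDensity_accept
    {Φ : (Fin ν → ℝ) × (Fin ν → ℝ) → (Fin ν → ℝ) × (Fin ν → ℝ)}
    (hH : Measurable H) (hΦ : Measurable Φ) :
    (gibbs β H).withDensity (fun x => ENNReal.ofReal (accept β H Φ x))
      = volume.withDensity fun x => min (gibbsDensity β H x) (gibbsDensity β H (Φ x)) := by
  rw [gibbs_eq_withDensity, ← withDensity_mul _ (measurable_gibbsDensity hH)
    (measurable_accept hH hΦ).ennreal_ofReal]
  congr 1
  funext x
  have hZ : 0 ≤ (∫ y, Real.exp (-β * H y))⁻¹ :=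
    inv_nonneg.2 (integral_nonneg fun _ => (Real.exp_pos _).le)
  simp only [Pi.mul_apply, gibbsDensity, accept]
  rw [← ENNReal.ofReal_mul (mul_nonneg hZ (Real.exp_pos _).le), ← ENNReal.ofReal_min,
    mul_min_of_nonneg _ _ (mul_nonneg hZ (Real.exp_pos _).le), mul_one, mul_assoc,
    ← Real.exp_add]
  ring_nf

end Gibbs

theorem Function.comp_palindrome_reversible {α : Type*} {R K D : α → α}
    (hK : ∀ x, K (R (K x)) = R x) (hD : ∀ x, D (R (D x)) = R x) (x : α) :
    (K ∘ D ∘ K) (R ((K ∘ D ∘ K) x)) = R x := by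
  simp only [Function.comp_apply, hK, hD]

theorem measurable_pi_indicator {α ι β : Type*} [MeasurableSpace α] [MeasurableSpace β]
    [Zero β] {s : Set ι} {g : α → ι → β} (hg : Measurable g) :
    Measurable fun a => s.indicator (g a) := by
  classical
  refine measurable_pi_lambda _ fun i => ?_
  by_cases hi : i ∈ s
  · simpa [hi] using measurable_pi_iff.1 hg i
  · simp [hi]

section PhaseSpace

variable {ν : ℕ} (h : ℝ) (M : Matrix (Fin ν) (Fin ν) ℝ) (U : (Fin ν → ℝ) → ℝ)
  (J : Finset (Fin ν))

noncomputable def kick (x : (Fin ν → ℝ) × (Fin ν → ℝ)) : (Fin ν → ℝ) × (Fin ν → ℝ) :=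
  (x.1, x.2 - (J : Set (Fin ν)).indicator fun i => h / 2 * grad U x.1 i)

noncomputable def drift (x : (Fin ν → ℝ) × (Fin ν → ℝ)) : (Fin ν → ℝ) × (Fin ν → ℝ) :=
  (x.1 + (J : Set (Fin ν)).indicator fun i => h * (M i i)⁻¹ * x.2 i, x.2)

theorem partialVerlet_eq_kick_drift_kick :
    partialVerlet h M U J = kick h U J ∘ drift h M J ∘ kick h U J := by
  funext x
  have hq : (partialVerlet h M U J x).1 = (kick h U J (drift h M J (kick h U J x))).1 := by
    ext i; by_cases hi : i ∈ J <;> simp [partialVerlet, kick, drift, hi]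
  refine Prod.ext hq (funext fun i => ?_)
  by_cases hi : i ∈ J <;> simp [partialVerlet, kick, drift, hi] at hq ⊢
  exact .inl (congrArg (grad U · i) hq)

theorem measurable_grad : Measurable (grad U) :=
  measurable_pi_lambda _ fun _ => measurable_fderiv_apply_const ℝ U _

theorem measurePreserving_kick : MeasurePreserving (kick h U J) := by
  have hf : Measurable fun q => -(J : Set (Fin ν)).indicator fun i => h / 2 * grad U q i :=
    (measurable_pi_indicator (measurable_pi_lambda _ fun i =>
      measurable_const.mul ((measurable_pi_apply i).comp (measurable_grad U)))).neg
  have hkick : kick h U J = fun x => (x.1, x.2 + -(J : Set (Fin ν)).indicator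
      fun i => h / 2 * grad U x.1 i) := by
    funext x
    simp only [kick, sub_eq_add_neg]
  rw [hkick, Measure.volume_eq_prod]
  exact measurePreserving_shearSnd hf

theorem measurePreserving_drift : MeasurePreserving (drift h M J) := by
  have hf : Measurable fun p : Fin ν → ℝ =>
      (J : Set (Fin ν)).indicator fun i => h * (M i i)⁻¹ * p i :=
    measurable_pi_indicator (measurable_pi_lambda _ fun i =>
      measurable_const.mul (measurable_pi_apply i))
  rw [Measure.volume_eq_prod]
  exact measurePreserving_shearFst hf

theorem measurePreserving_partialVerlet : MeasurePreserving (partialVerlet h M U J) := by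
  rw [partialVerlet_eq_kick_drift_kick]
  exact (measurePreserving_kick h U J).comp
    ((measurePreserving_drift h M J).comp (measurePreserving_kick h U J))

theorem measurePreserving_partialMomentumFlip :
    MeasurePreserving (partialMomentumFlip J (ν := ν)) := by
  have hflip : MeasurePreserving fun (p : Fin ν → ℝ) (i : Fin ν) =>
      (if i ∈ J then Neg.neg else id) (p i) :=
    volume_preserving_pi fun i => by
      split_ifs
      exacts [Measure.measurePreserving_neg volume, .id volume]
  have hR : partialMomentumFlip J = Prod.map id fun (p : Fin ν → ℝ) (i : Fin ν) =>
      (if i ∈ J then Neg.neg else id) (p i) := by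
    funext x
    ext i <;> by_cases hi : i ∈ J <;> simp [partialMomentumFlip, hi]
  rw [hR, Measure.volume_eq_prod]
  exact (MeasurePreserving.id volume).prod hflip

theorem partialMomentumFlip_involutive : Involutive (partialMomentumFlip J (ν := ν)) := by
  intro x
  ext i <;> by_cases hi : i ∈ J <;> simp [partialMomentumFlip, hi]

theorem kick_partialMomentumFlip_kick (x : (Fin ν → ℝ) × (Fin ν → ℝ)) :
    kick h U J (partialMomentumFlip J (kick h U J x)) = partialMomentumFlip J x := by
  ext i <;> by_cases hi : i ∈ J <;> simp [partialMomentumFlip, kick, hi]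

theorem drift_partialMomentumFlip_drift (x : (Fin ν → ℝ) × (Fin ν → ℝ)) :
    drift h M J (partialMomentumFlip J (drift h M J x)) = partialMomentumFlip J x := by
  ext i <;> by_cases hi : i ∈ J <;> simp [partialMomentumFlip, drift, hi]

theorem partialVerlet_partialMomentumFlip_partialVerlet (x : (Fin ν → ℝ) × (Fin ν → ℝ)) :
    partialVerlet h M U J (partialMomentumFlip J (partialVerlet h M U J x))
      = partialMomentumFlip J x := by
  rw [partialVerlet_eq_kick_drift_kick]
  exact Function.comp_palindrome_reversible (kick_partialMomentumFlip_kick h U J)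
    (drift_partialMomentumFlip_drift h M J) x

theorem hamiltonian_partialMomentumFlip (hM : M.IsDiag) (x : (Fin ν → ℝ) × (Fin ν → ℝ)) :
    hamiltonian M U (partialMomentumFlip J x) = hamiltonian M U x := by
  rw [← hM.diagonal_diag]
  simp only [hamiltonian, partialMomentumFlip, inv_diagonal, mulVec_diagonal, dotProduct]
  congr 2
  refine Finset.sum_congr rfl fun i _ => ?_
  split_ifs <;> ring

theorem measurable_hamiltonian (hU : Measurable U) : Measurable (hamiltonian M U) := by
  unfold hamiltonian; fun_prop

end PhaseSpace

theorem metropolized_partialVerlet_preserves_gibbs_general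
    (ν : ℕ) (h β : ℝ)
    (M : Matrix (Fin ν) (Fin ν) ℝ)
    (hMdiag : ∀ i j, i ≠ j → M i j = 0)
    (U : (Fin ν → ℝ) → ℝ) (hU : ContDiff ℝ 1 U)
    (hHint : Integrable (fun x => Real.exp (-β * hamiltonian M U x)) volume)
    (J : Finset (Fin ν)) :
    ∀ A : Set ((Fin ν → ℝ) × (Fin ν → ℝ)), MeasurableSet A →
      ∫ x, (accept β (hamiltonian M U) (partialVerlet h M U J) x
              * A.indicator 1 (partialVerlet h M U J x)
            + (1 - accept β (hamiltonian M U) (partialVerlet h M U J) x)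
              * A.indicator 1 (partialMomentumFlip J x))
        ∂(gibbs β (hamiltonian M U))
      = ((gibbs β (hamiltonian M U)) A).toReal := by
  intro A hA
  have hH := measurable_hamiltonian M U hU.continuous.measurable
  have hθ := measurePreserving_partialVerlet h M U J
  have hR := measurePreserving_partialMomentumFlip J (ν := ν)
  have := isFiniteMeasure_gibbs hHint
  refine integral_metropolis_eq (measurable_accept hH hθ.measurable) (accept_nonneg _)
    (accept_le_one _) hθ.measurable
    (measurePreserving_gibbs hH hR (hamiltonian_partialMomentumFlip M U J hMdiag)) ?_ hA
  rw [gibbs_withDensity_accept hH hθ.measurable]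
  exact map_withDensity_min_eq_map_of_reversible (measurable_gibbsDensity hH) hθ hR
    (partialMomentumFlip_involutive J)
    (gibbsDensity_apply_of_invariant (hamiltonian_partialMomentumFlip M U J hMdiag))
    (partialVerlet_partialMomentumFlip_partialVerlet h M U J)

/-- The Metropolized partial Verlet update preserves the Gibbs measure. -/
theorem metropolized_partialVerlet_preserves_gibbs
    (ν : ℕ) (h β : ℝ) (hh : 0 < h) (hβ : 0 < β)
    (M : Matrix (Fin ν) (Fin ν) ℝ)
    (hMdiag : ∀ i j, i ≠ j → M i j = 0) (hMpos : ∀ i, 0 < M i i)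
    (U : (Fin ν → ℝ) → ℝ) (hU : ContDiff ℝ 1 U)
    (hUint : Integrable (fun q => Real.exp (-β * U q)) volume)
    (hHint : Integrable (fun x => Real.exp (-β * hamiltonian M U x)) volume)
    (J : Finset (Fin ν)) :
    ∀ A : Set ((Fin ν → ℝ) × (Fin ν → ℝ)), MeasurableSet A →
      ∫ x, (accept β (hamiltonian M U) (partialVerlet h M U J) x
              * A.indicator 1 (partialVerlet h M U J x)
            + (1 - accept β (hamiltonian M U) (partialVerlet h M U J) x)
              * A.indicator 1 (partialMomentumFlip J x))
        ∂(gibbs β (hamiltonian M U))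
      = ((gibbs β (hamiltonian M U)) A).toReal :=
  metropolized_partialVerlet_preserves_gibbs_general ν h β M hMdiag U hU hHint J
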